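/- Suppose ℙ and ℚ are stationary measures on Ω with supp ℚ ⊆ supp ℙ, ℙ satisfies FE and SE with constants γ_+ < 0 and γ_- < 0, and ℚ satisfies condition ID with sequence (k_n) and condition FE with the same constant γ_+. Fix ε ∈ (0,1/2) and 0 < α < γ_+/(8γ_-), and consider the block auxiliary parsing of y_1^N. Then, with ℓ_- := ln N/(−2γ_-), for every block index s and every N large enough, ℚ{y : block s of y_1^N is bad} ≤ e^{k_{ℓ_-}} N^{−2α}. -/

import Mathlib

open MeasureTheory Filter Asymptotics
open scoped ENNReal Classical

noncomputable section

namespace ZM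

/-- The left shift on one-sided sequences. -/
def shift {A : Type*} (x : ℕ → A) : ℕ → A := fun k => x (k + 1)

/-- The cylinder set of all sequences starting with the word `a`. -/
def cyl {A : Type*} {n : ℕ} (a : Fin n → A) : Set (ℕ → A) := {x | ∀ i : Fin n, x i = a i}

/-- The word `x_{p+1}^{p+ℓ}` of `x` (0-based: the letters at positions `p, …, p+ℓ-1`). -/
def seg {A : Type*} (y : ℕ → A) (p ℓ : ℕ) : Fin ℓ → A := fun i => y (p + i)

/-- `w` occurs in `x` at (0-based) offset `r`. -/
def matchAt {A : Type*} (x : ℕ → A) {ℓ : ℕ} (w : Fin ℓ → A) (r : ℕ) : Prop :=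
  ∀ i : Fin ℓ, x (r + i) = w i

/-- `w` appears as a substring of `x_1^N`. -/
def appears {A : Type*} (N : ℕ) (x : ℕ → A) {ℓ : ℕ} (w : Fin ℓ → A) : Prop :=
  ∃ r, r + ℓ ≤ N ∧ matchAt x w r

/-- The waiting time `W_ℓ(w, x)`: the least (1-based) position at which `w` occurs in `x`,
`⊤` if `w` never occurs. -/
def W {A : Type*} {ℓ : ℕ} (w : Fin ℓ → A) (x : ℕ → A) : ℕ∞ :=
  sInf {r : ℕ∞ | ∃ n : ℕ, r = (n : ℕ∞) ∧ 1 ≤ n ∧ matchAt x w (n - 1)}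

section ZMparsing

variable {A : Type*}

/-- Length of the Ziv–Merhav word starting at (0-based) position `p` of `y_1^N`, with
database `x_1^N`: the longest prefix of the remaining portion of `y_1^N` appearing as a
substring of `x_1^N`, or a single letter if there is no such prefix. -/
def zmLen (N : ℕ) (x y : ℕ → A) (p : ℕ) : ℕ :=
  max 1 (sSup {ℓ | p + ℓ ≤ N ∧ appears N x (seg y p ℓ)})

/-- Starting position of the `j`-th (0-based) word of the Ziv–Merhav parsing. -/
def zmPos (N : ℕ) (x y : ℕ → A) : ℕ → ℕ
  | 0 => 0
  | j + 1 => zmPos N x y j + zmLen N x y (zmPos N x y j)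

/-- `c_N(y|x)`: the number of words in the Ziv–Merhav parsing of `y_1^N` w.r.t. `x_1^N`. -/
def cN (N : ℕ) (x y : ℕ → A) : ℕ := sInf {c | N ≤ zmPos N x y c}

/-- The Ziv–Merhav estimator `Q̂_N(y, x) = c_N(y|x) ln N / N`. -/
def ZMest (N : ℕ) (x y : ℕ → A) : ℝ := (cN N x y : ℝ) * Real.log N / N

end ZMparsing

section MeasureDefs

variable {A : Type*} [MeasurableSpace A]

/-- The measure of the cylinder of a word, as a real number. -/
def wp (μ : Measure (ℕ → A)) {n : ℕ} (a : Fin n → A) : ℝ := (μ (cyl a)).toReal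

/-- `supp ℙ`: the set of sequences all of whose prefixes have positive measure. -/
def suppSet (μ : Measure (ℕ → A)) : Set (ℕ → A) := {x | ∀ n, 0 < μ (cyl (seg x 0 n))}

/-- Condition (ID): immediate decoupling on the support, with sequence `k`. -/
def CondID (μ : Measure (ℕ → A)) (k : ℕ → ℝ) : Prop :=
  Monotone k ∧ (k =o[atTop] fun n => (n : ℝ)) ∧
    ∀ (n m : ℕ) (a : Fin n → A) (b : Fin m → A), 0 < μ (cyl a) → 0 < μ (cyl b) →
      wp μ (Fin.append a b) ≤ Real.exp (k n) * (wp μ a * wp μ b) ∧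
      (0 < μ (cyl (Fin.append a b)) →
        Real.exp (-k n) * (wp μ a * wp μ b) ≤ wp μ (Fin.append a b))

/-- Condition (FE): fast enough decay, with rate `γp < 0`. -/
def CondFE (μ : Measure (ℕ → A)) (γp : ℝ) : Prop :=
  γp < 0 ∧ ∀ᶠ n : ℕ in atTop, ∀ a : Fin n → A, 0 < μ (cyl a) → wp μ a ≤ Real.exp (γp * n)

/-- Condition (SE): slow enough decay, with rate `γm < 0`. -/
def CondSE (μ : Measure (ℕ → A)) (γm : ℝ) : Prop :=
  γm < 0 ∧ ∀ᶠ n : ℕ in atTop, ∀ a : Fin n → A, 0 < μ (cyl a) → Real.exp (γm * n) ≤ wp μ a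

/-- Condition (KB): Kontoyiannis' bound on waiting times, with sequences `k`, `τ`. -/
def CondKB (μ : Measure (ℕ → A)) (k τ : ℕ → ℝ) : Prop :=
  (k =o[atTop] fun n => (n : ℝ)) ∧ (τ =o[atTop] fun n => (n : ℝ)) ∧
    ∀ (ℓ : ℕ) (a : Fin ℓ → A) (r : ℕ),
      (μ {x | (r : ℕ∞) ≤ W a x}).toReal ≤
        Real.exp (-(Real.exp (-k ℓ) * wp μ a * (⌊((r : ℝ) - 1) / ((ℓ : ℝ) + τ ℓ)⌋ : ℝ)))

/-- Length of the next word of the auxiliary parsing of `y_1^N` starting at position `p`: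
the shortest prefix of the remaining portion of `y_1^N` with measure at most `θ`, or the
whole remaining portion if there is no such prefix. -/
def auxLen (μ : Measure (ℕ → A)) (θ : ℝ) (N : ℕ) (y : ℕ → A) (p : ℕ) : ℕ :=
  if ∃ ℓ, 1 ≤ ℓ ∧ p + ℓ ≤ N ∧ wp μ (seg y p ℓ) ≤ θ then
    sInf {ℓ | 1 ≤ ℓ ∧ p + ℓ ≤ N ∧ wp μ (seg y p ℓ) ≤ θ}
  else N - p

/-- Starting position of the `j`-th (0-based) word of the auxiliary parsing. -/
def auxPos (μ : Measure (ℕ → A)) (θ : ℝ) (N : ℕ) (y : ℕ → A) : ℕ → ℕ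
  | 0 => 0
  | j + 1 => auxPos μ θ N y j + max 1 (auxLen μ θ N y (auxPos μ θ N y j))

/-- Length of the `j`-th (0-based) word of the auxiliary parsing. -/
def auxWordLen (μ : Measure (ℕ → A)) (θ : ℝ) (N : ℕ) (y : ℕ → A) (j : ℕ) : ℕ :=
  max 1 (auxLen μ θ N y (auxPos μ θ N y j))

/-- The number of words in the auxiliary parsing of `y_1^N`. -/
def auxCount (μ : Measure (ℕ → A)) (θ : ℝ) (N : ℕ) (y : ℕ → A) : ℕ :=
  sInf {c | N ≤ auxPos μ θ N y c}

/-- Length of the next word of the block parsing within a block ending at position `e`: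
the shortest prefix of the remaining portion of the block with measure at most `θ`;
`0` encodes that no such prefix exists (the rest of the block is the buffer). -/
def blkLen (μ : Measure (ℕ → A)) (θ : ℝ) (e : ℕ) (y : ℕ → A) (p : ℕ) : ℕ :=
  sInf {ℓ | 1 ≤ ℓ ∧ p + ℓ ≤ e ∧ wp μ (seg y p ℓ) ≤ θ}

/-- Starting position of the `i`-th (0-based) word of the block starting at `q`, ending at `e`. -/
def blkPos (μ : Measure (ℕ → A)) (θ : ℝ) (e : ℕ) (y : ℕ → A) (q : ℕ) : ℕ → ℕ
  | 0 => q
  | i + 1 => blkPos μ θ e y q i + blkLen μ θ e y (blkPos μ θ e y q i)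

/-- Number `d_s` of words in the block starting at `q` and ending at `e`. -/
def dCount (μ : Measure (ℕ → A)) (θ : ℝ) (e : ℕ) (y : ℕ → A) (q : ℕ) : ℕ :=
  sInf {i | blkLen μ θ e y (blkPos μ θ e y q i) = 0}

/-- The block starting at `q` and ending at `e` is good: its parsed words are pairwise
distinct. -/
def GoodBlock (μ : Measure (ℕ → A)) (θ : ℝ) (e : ℕ) (y : ℕ → A) (q : ℕ) : Prop :=
  ∀ i j : ℕ, i < dCount μ θ e y q → j < dCount μ θ e y q →
    blkLen μ θ e y (blkPos μ θ e y q i) = blkLen μ θ e y (blkPos μ θ e y q j) →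
    (∀ t < blkLen μ θ e y (blkPos μ θ e y q i),
      y (blkPos μ θ e y q i + t) = y (blkPos μ θ e y q j + t)) →
    i = j

end MeasureDefs

/-- The block length `⌊N^α⌋`. -/
def blockB (N : ℕ) (α : ℝ) : ℕ := ⌊(N : ℝ) ^ α⌋₊

/-- The number `M_N` of blocks. -/
def blockM (N : ℕ) (α : ℝ) : ℕ := (N + blockB N α - 1) / blockB N α

/-- The starting position of the `s`-th (0-based) block. -/
def blockStart (N : ℕ) (α : ℝ) (s : ℕ) : ℕ := s * blockB N α

/-- The end position of the `s`-th (0-based) block. -/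
def blockEnd (N : ℕ) (α : ℝ) (s : ℕ) : ℕ := min ((s + 1) * blockB N α) N

/-- `S_b(y_1^N)`: the set of bad blocks of the block auxiliary parsing (with threshold
`N^{-1-ε}`, word probabilities computed with `μ`). -/
def badSet {A : Type*} [MeasurableSpace A] (μ : Measure (ℕ → A)) (N : ℕ) (α ε : ℝ)
    (y : ℕ → A) : Set ℕ :=
  {s | s < blockM N α ∧
    ¬ GoodBlock μ ((N : ℝ) ^ (-1 - ε)) (blockEnd N α s) y (blockStart N α s)}

/-- `ℓ₋ = ln N / (-2 γ₋)`. -/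
def ellMinus (N : ℕ) (γm : ℝ) : ℝ := Real.log N / (-2 * γm)

/-- `ℓ₊ = 2 ln N / (-γ₊)`. -/
def ellPlus (N : ℕ) (γp : ℝ) : ℝ := 2 * Real.log N / (-γp)

/-- `d₊ = 2 N^α / ℓ₋`. -/
def dPlus (N : ℕ) (α γm : ℝ) : ℝ := 2 * (N : ℝ) ^ α / ellMinus N γm

section CrossEntropy

variable {A : Type*} [MeasurableSpace A] [Fintype A]

/-- The `n`-th cross-entropy average `-(1/n) ∑_{a ∈ 𝒜ⁿ} ℚ[a] ln ℙ[a]`, real-valued version. -/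
def hcSeq (μP μQ : Measure (ℕ → A)) (n : ℕ) : ℝ :=
  -(1 / (n : ℝ)) * ∑ a : Fin n → A, wp μQ a * Real.log (wp μP a)

/-- `-ln p` as an element of `[0, ∞]`, for `p ∈ [0, 1]`; equals `⊤` when `p = 0`. -/
def negLog (p : ℝ≥0∞) : ℝ≥0∞ := if p = 0 then ⊤ else ENNReal.ofReal (-Real.log p.toReal)

/-- The `n`-th cross-entropy average, `[0, ∞]`-valued version. -/
def hcSeqE (μP μQ : Measure (ℕ → A)) (n : ℕ) : ℝ≥0∞ :=
  (∑ a : Fin n → A, μQ (cyl a) * negLog (μP (cyl a))) / (n : ℝ≥0∞)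

end CrossEntropy

end ZM

namespace ZM

/-!
A bad block contains two equal parsed words, each of probability at most `N^{-1-ε}`; by (SE)
every such word has length at least `ℓ₋`, so some word of length `L = ⌈ℓ₋⌉` occurs twice, at
positions at least `L` apart, inside a block of length `N^α`. For a fixed pair of positions,
decoupling (ID), stationarity and (FE) bound the probability of this repetition by
`e^{k_L} max_u ℚ[u] ≤ e^{k_L} e^{γ₊ ℓ₋}`, and a union bound over the `N^{2α}` pairs gives the
claim since `e^{γ₊ ℓ₋} ≤ N^{-4α}`.
-/
section Shift

variable {A : Type*}

lemma shift_iterate_apply (p : ℕ) (x : ℕ → A) (k : ℕ) : (shift^[p] x) k = x (k + p) := by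
  induction p generalizing x with
  | zero => rfl
  | succ p ih => rw [Function.iterate_succ_apply, ih]; simp only [shift]; ring_nf

lemma setOf_forall_fin_add {n m : ℕ} (S : Fin (n + m) → Set A) :
    {x : ℕ → A | ∀ i, x i ∈ S i} =
      {x | ∀ i : Fin n, x i ∈ S (Fin.castAdd m i)} ∩
        shift^[n] ⁻¹' {x | ∀ j : Fin m, x j ∈ S (Fin.natAdd n j)} := by
  ext x
  simp only [Set.mem_ofPred_eq, Set.mem_inter_iff, Set.mem_preimage, shift_iterate_apply,
    Fin.forall_fin_add, Fin.val_castAdd, Fin.val_natAdd, add_comm]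

lemma cyl_append {n m : ℕ} (a : Fin n → A) (b : Fin m → A) :
    cyl (Fin.append a b) = cyl a ∩ shift^[n] ⁻¹' cyl b := by
  simpa [cyl, Fin.append_left, Fin.append_right] using
    setOf_forall_fin_add (fun i => ({Fin.append a b i} : Set A))

end Shift

section Support

variable {A : Type*} [MeasurableSpace A] {μ : Measure (ℕ → A)}

lemma measure_cyl_seg_pos (hstat : MeasurePreserving shift μ μ) {y : ℕ → A}
    (hy : y ∈ suppSet μ) (p ℓ : ℕ) : 0 < μ (cyl (seg y p ℓ)) := by
  have hsub : cyl (seg y 0 (p + ℓ)) ⊆ shift^[p] ⁻¹' cyl (seg y p ℓ) := by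
    intro x hx i
    simpa [seg, shift_iterate_apply, add_comm] using hx ⟨p + i, by omega⟩
  exact ((hy (p + ℓ)).trans_le (measure_mono hsub)).trans_le
    ((hstat.iterate p).measure_preimage_le _)

lemma ae_mem_suppSet [Countable A] (μ : Measure (ℕ → A)) : ∀ᵐ y ∂μ, y ∈ suppSet μ := by
  have hsub : {y | y ∉ suppSet μ} ⊆ ⋃ (n : ℕ) (a : {a : Fin n → A // μ (cyl a) = 0}), cyl a.1 := by
    intro y hy
    obtain ⟨n, hn⟩ : ∃ n, μ (cyl (seg y 0 n)) = 0 := by simpa [suppSet] using hy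
    exact Set.mem_iUnion₂.2 ⟨n, ⟨_, hn⟩, fun i => by simp [seg]⟩
  exact measure_mono_null hsub (measure_iUnion_null fun n => measure_iUnion_null fun a => a.2)

end Support

section Atoms

variable {A : Type*} [MeasurableSpace A]

/-- `𝒜` carries an arbitrary σ-algebra, so cylinders need not be measurable; sums over words are
taken over the cylinders of measurable atoms instead, which are measurable and have the same
measure (`measure_atomCyl`). -/
def atomCyl {n : ℕ} (u : Fin n → A) : Set (ℕ → A) := {x | ∀ i : Fin n, x i ∈ measurableAtom (u i)}

lemma cyl_subset_atomCyl {n : ℕ} (u : Fin n → A) : cyl u ⊆ atomCyl u := by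
  intro x hx i
  rw [hx i]
  exact mem_measurableAtom_self _

lemma measurableSet_atomCyl [Countable A] {n : ℕ} (u : Fin n → A) :
    MeasurableSet (atomCyl u) := by
  simp only [atomCyl, Set.ofPred_forall]
  exact MeasurableSet.iInter fun i =>
    measurable_pi_apply _ (MeasurableSet.measurableAtom_of_countable (u i))

lemma atomCyl_append {n m : ℕ} (a : Fin n → A) (b : Fin m → A) :
    atomCyl (Fin.append a b) = atomCyl a ∩ shift^[n] ⁻¹' atomCyl b := by
  simpa [atomCyl, Fin.append_left, Fin.append_right] using
    setOf_forall_fin_add (fun i => measurableAtom (Fin.append a b i))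

/-- The sets `{x | (fun k => measurableAtom (x k)) ∈ U}` form a σ-algebra containing the
generators of the product σ-algebra. -/
lemma mem_of_measurableAtom_eq {T : Set (ℕ → A)} (hT : MeasurableSet T) {x x' : ℕ → A}
    (h : ∀ k, measurableAtom (x' k) = measurableAtom (x k)) (hx : x ∈ T) : x' ∈ T := by
  let atoms : (ℕ → A) → ℕ → Set A := fun y k => measurableAtom (y k)
  have hle : MeasurableSpace.pi ≤ MeasurableSpace.comap atoms ⊤ := by
    refine iSup_le fun k => MeasurableSpace.comap_le_iff_le_map.2 fun M hM => ?_
    refine ⟨{g | g k ⊆ M}, trivial, Set.ext fun y => ?_⟩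
    exact ⟨fun hy => hy (mem_measurableAtom_self _), fun hy => measurableAtom_subset hM hy⟩
  obtain ⟨U, -, rfl⟩ := hle T hT
  have : atoms x' = atoms x := funext h
  simpa [this] using hx

lemma measure_atomCyl [Countable A] (μ : Measure (ℕ → A)) {n : ℕ} (u : Fin n → A) :
    μ (atomCyl u) = μ (cyl u) := by
  refine le_antisymm ?_ (measure_mono (cyl_subset_atomCyl u))
  calc μ (atomCyl u) ≤ μ (toMeasurable μ (cyl u)) := by
        refine measure_mono fun x' hx' => ?_
        let x : ℕ → A := fun k => if hk : k < n then u ⟨k, hk⟩ else x' k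
        refine mem_of_measurableAtom_eq (measurableSet_toMeasurable μ _) (x := x) (fun k => ?_)
          (subset_toMeasurable μ _ fun i => by simp [x])
        by_cases hk : k < n
        · simpa [x, hk] using measurableAtom_eq_of_mem (hx' ⟨k, hk⟩)
        · simp [x, hk]
    _ = μ (cyl u) := measure_toMeasurable _

def atomRep (a : A) : A := (Set.nonempty_of_mem (mem_measurableAtom_self a)).some

lemma measurableAtom_atomRep (a : A) : measurableAtom (atomRep a) = measurableAtom a :=
  measurableAtom_eq_of_mem (Set.Nonempty.some_mem _)

lemma atomRep_eq_of_measurableAtom_eq {a b : A} (h : measurableAtom a = measurableAtom b) :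
    atomRep a = atomRep b := by
  unfold atomRep
  congr 1

lemma mem_atomCyl_atomRep_comp {n : ℕ} {x : ℕ → A} {u : Fin n → A} :
    x ∈ atomCyl (atomRep ∘ u) ↔ ∀ i : Fin n, measurableAtom (x i) = measurableAtom (u i) := by
  simp only [atomCyl, Set.mem_ofPred_eq, Function.comp_apply]
  refine forall_congr' fun i => ⟨fun h => ?_, fun h => ?_⟩
  · rw [measurableAtom_eq_of_mem h, measurableAtom_atomRep]
  · rw [measurableAtom_atomRep, ← h]
    exact mem_measurableAtom_self _

lemma mem_atomCyl_self (x : ℕ → A) (n : ℕ) :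
    x ∈ atomCyl (atomRep ∘ fun i : Fin n => x i) :=
  mem_atomCyl_atomRep_comp.2 fun _ => rfl

variable [Fintype A]

variable (A) in
def atomWords (n : ℕ) : Finset (Fin n → A) := Finset.univ.image fun u => atomRep ∘ u

lemma pairwiseDisjoint_atomCyl (n : ℕ) :
    (atomWords A n : Set (Fin n → A)).PairwiseDisjoint atomCyl := by
  simp only [atomWords, Finset.coe_image, Finset.coe_univ, Set.image_univ]
  rintro _ ⟨u, rfl⟩ _ ⟨v, rfl⟩ hne
  refine Set.disjoint_left.2 fun x hu hv => hne (funext fun i => ?_)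
  rw [mem_atomCyl_atomRep_comp] at hu hv
  exact atomRep_eq_of_measurableAtom_eq ((hu i).symm.trans (hv i))

lemma sum_measure_atomCyl_inter_le (μ : Measure (ℕ → A)) {S : Set (ℕ → A)}
    (hS : MeasurableSet S) (n : ℕ) : ∑ u ∈ atomWords A n, μ (atomCyl u ∩ S) ≤ μ S := by
  rw [← measure_biUnion_finset ((pairwiseDisjoint_atomCyl n).mono fun _ => Set.inter_subset_left)
    fun u _ => (measurableSet_atomCyl u).inter hS]
  exact measure_mono (Set.iUnion₂_subset fun _ _ => Set.inter_subset_right)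

end Atoms

section Decoupling

variable {A : Type*} [MeasurableSpace A] {μ : Measure (ℕ → A)}

lemma CondFE.eventually_measure_cyl_le [IsFiniteMeasure μ] {γ : ℝ} (hFE : CondFE μ γ) :
    ∀ᶠ n : ℕ in atTop, ∀ a : Fin n → A, μ (cyl a) ≤ ENNReal.ofReal (Real.exp (γ * n)) := by
  filter_upwards [hFE.2] with n hn a
  rcases eq_zero_or_pos (μ (cyl a)) with h | h
  · simp [h]
  · rw [← ENNReal.ofReal_toReal (measure_ne_top μ _)]
    exact ENNReal.ofReal_le_ofReal (hn a h)

lemma CondID.measure_cyl_append_le [IsFiniteMeasure μ] {k : ℕ → ℝ} (hID : CondID μ k)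
    (hstat : MeasurePreserving shift μ μ) {n m : ℕ} (a : Fin n → A) (b : Fin m → A) :
    μ (cyl (Fin.append a b)) ≤ ENNReal.ofReal (Real.exp (k n)) * (μ (cyl a) * μ (cyl b)) := by
  rcases eq_zero_or_pos (μ (cyl a)) with ha | ha
  · simp [measure_mono_null (cyl_append a b ▸ Set.inter_subset_left) ha]
  rcases eq_zero_or_pos (μ (cyl b)) with hb | hb
  · have hsub : cyl (Fin.append a b) ⊆ shift^[n] ⁻¹' cyl b :=
      cyl_append a b ▸ Set.inter_subset_right
    simp [measure_mono_null hsub ((hstat.iterate n).preimage_null hb)]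
  calc μ (cyl (Fin.append a b)) = ENNReal.ofReal (wp μ (Fin.append a b)) :=
        (ENNReal.ofReal_toReal (measure_ne_top μ _)).symm
    _ ≤ ENNReal.ofReal (Real.exp (k n) * (wp μ a * wp μ b)) :=
        ENNReal.ofReal_le_ofReal (hID.2.2 n m a b ha hb).1
    _ = ENNReal.ofReal (Real.exp (k n)) * (μ (cyl a) * μ (cyl b)) := by
        simp only [wp]
        rw [ENNReal.ofReal_mul (Real.exp_pos _).le, ENNReal.ofReal_mul ENNReal.toReal_nonneg,
          ENNReal.ofReal_toReal (measure_ne_top μ _), ENNReal.ofReal_toReal (measure_ne_top μ _)]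

variable [Fintype A] [IsProbabilityMeasure μ] {k : ℕ → ℝ} {L : ℕ} {c : ℝ≥0∞}

/-- Split a repetition `y_{[0,L)} = y_{[r,r+L)}` as `u m u` over atom words: decoupling bounds
`μ[u m u] ≤ e^{k_L} μ[u] μ[m u]`, the middle words sum out by stationarity, `μ[u] ≤ c` and the
remaining `∑ μ[u]` is at most one. -/
lemma measure_prefix_repeat_le (hstat : MeasurePreserving shift μ μ) (hID : CondID μ k)
    (hmax : ∀ u : Fin L → A, μ (cyl u) ≤ c) {r : ℕ} (hLr : L ≤ r) :
    μ {y | ∀ t < L, y t = y (r + t)} ≤ ENNReal.ofReal (Real.exp (k L)) * c := by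
  set K := ENNReal.ofReal (Real.exp (k L))
  have hcover : {y : ℕ → A | ∀ t < L, y t = y (r + t)} ⊆
      ⋃ u ∈ atomWords A L, ⋃ m ∈ atomWords A (r - L), atomCyl (Fin.append u (Fin.append m u)) := by
    intro y hy
    refine Set.mem_biUnion (Finset.mem_image_of_mem _ (Finset.mem_univ fun i : Fin L => y i)) ?_
    refine Set.mem_biUnion
      (Finset.mem_image_of_mem _ (Finset.mem_univ fun i : Fin (r - L) => y (i + L))) ?_
    rw [atomCyl_append, atomCyl_append, Set.preimage_inter, ← Set.preimage_comp,
      ← Function.iterate_add]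
    refine ⟨mem_atomCyl_self y L, ?_, ?_⟩
    · exact mem_atomCyl_atomRep_comp.2 fun i => by rw [shift_iterate_apply]
    · refine mem_atomCyl_atomRep_comp.2 fun i => ?_
      rw [shift_iterate_apply, hy i i.2, Nat.sub_add_cancel hLr, add_comm]
  have hmiddle (u : Fin L → A) : ∑ m ∈ atomWords A (r - L), μ (atomCyl (Fin.append m u)) ≤
      μ (atomCyl u) := by
    simp_rw [atomCyl_append]
    refine (sum_measure_atomCyl_inter_le μ ?_ _).trans ((hstat.iterate _).measure_preimage_le _)
    exact (hstat.measurable.iterate _) (measurableSet_atomCyl u)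
  calc μ {y | ∀ t < L, y t = y (r + t)}
      ≤ ∑ u ∈ atomWords A L, ∑ m ∈ atomWords A (r - L),
          μ (atomCyl (Fin.append u (Fin.append m u))) :=
        (measure_mono hcover).trans ((measure_biUnion_finset_le _ _).trans
          (Finset.sum_le_sum fun _ _ => measure_biUnion_finset_le _ _))
    _ ≤ ∑ u ∈ atomWords A L, ∑ m ∈ atomWords A (r - L),
          K * (μ (atomCyl u) * μ (atomCyl (Fin.append m u))) := by
        gcongr with u _ m _
        simp only [measure_atomCyl]
        exact hID.measure_cyl_append_le hstat u _
    _ = ∑ u ∈ atomWords A L, K * μ (atomCyl u) *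
          ∑ m ∈ atomWords A (r - L), μ (atomCyl (Fin.append m u)) := by
        simp_rw [Finset.mul_sum, mul_assoc]
    _ ≤ ∑ u ∈ atomWords A L, K * μ (atomCyl u) * c := by
        gcongr with u _
        exact (hmiddle u).trans (measure_atomCyl μ u ▸ hmax u)
    _ = K * c * ∑ u ∈ atomWords A L, μ (atomCyl u ∩ Set.univ) := by
        simp_rw [Set.inter_univ, Finset.mul_sum, mul_right_comm]
    _ ≤ K * c := mul_le_of_le_one_right'
        ((sum_measure_atomCyl_inter_le μ MeasurableSet.univ L).trans prob_le_one)

lemma measure_repeat_le (hstat : MeasurePreserving shift μ μ) (hID : CondID μ k)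
    (hmax : ∀ u : Fin L → A, μ (cyl u) ≤ c) {p p' : ℕ} (hpp' : p + L ≤ p') :
    μ {y | ∀ t < L, y (p + t) = y (p' + t)} ≤ ENNReal.ofReal (Real.exp (k L)) * c := by
  have hset : {y : ℕ → A | ∀ t < L, y (p + t) = y (p' + t)} =
      shift^[p] ⁻¹' {y | ∀ t < L, y t = y (p' - p + t)} := by
    ext y
    simp only [Set.mem_ofPred_eq, Set.mem_preimage, shift_iterate_apply]
    refine forall₂_congr fun t _ => ?_
    rw [show p' - p + t + p = p' + t by omega, add_comm t]
  rw [hset]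
  exact ((hstat.iterate p).measure_preimage_le _).trans
    (measure_prefix_repeat_le hstat hID hmax (by omega))

end Decoupling

section Parsing

variable {A : Type*} [MeasurableSpace A] {μ : Measure (ℕ → A)} {θ : ℝ} {e q : ℕ} {y : ℕ → A}

lemma blkPos_add_blkLen_le {i j : ℕ} (hij : i < j) :
    blkPos μ θ e y q i + blkLen μ θ e y (blkPos μ θ e y q i) ≤ blkPos μ θ e y q j :=
  (monotone_nat_of_le_succ fun _ => Nat.le_add_right _ _ :
    Monotone (blkPos μ θ e y q)) (Nat.succ_le_of_lt hij)

lemma le_blkPos (i : ℕ) : q ≤ blkPos μ θ e y q i := by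
  induction i with
  | zero => rfl
  | succ i ih => exact ih.trans (Nat.le_add_right _ _)

lemma blkLen_spec {p : ℕ} (h : blkLen μ θ e y p ≠ 0) :
    1 ≤ blkLen μ θ e y p ∧ p + blkLen μ θ e y p ≤ e ∧ wp μ (seg y p (blkLen μ θ e y p)) ≤ θ :=
  Nat.sInf_mem (Nat.nonempty_of_pos_sInf (Nat.pos_of_ne_zero h))

lemma blkLen_ne_zero_of_lt_dCount {i : ℕ} (hi : i < dCount μ θ e y q) :
    blkLen μ θ e y (blkPos μ θ e y q i) ≠ 0 :=
  Nat.notMem_of_lt_sInf (s := {i | blkLen μ θ e y (blkPos μ θ e y q i) = 0}) hi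

lemma exists_repeat_of_not_goodBlock {L : ℕ} (hbad : ¬ GoodBlock μ θ e y q)
    (hlong : ∀ p ℓ, wp μ (seg y p ℓ) ≤ θ → L ≤ ℓ) :
    ∃ p p', q ≤ p ∧ p + L ≤ p' ∧ p' < e ∧ ∀ t < L, y (p + t) = y (p' + t) := by
  have key : ∀ i j, i < j → j < dCount μ θ e y q →
      blkLen μ θ e y (blkPos μ θ e y q i) = blkLen μ θ e y (blkPos μ θ e y q j) →
      (∀ t < blkLen μ θ e y (blkPos μ θ e y q i),
        y (blkPos μ θ e y q i + t) = y (blkPos μ θ e y q j + t)) →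
      ∃ p p', q ≤ p ∧ p + L ≤ p' ∧ p' < e ∧ ∀ t < L, y (p + t) = y (p' + t) := by
    intro i j hij hj hlen hletters
    obtain ⟨hi1, -, hiθ⟩ := blkLen_spec (blkLen_ne_zero_of_lt_dCount (hij.trans hj))
    obtain ⟨hj1, hje, -⟩ := blkLen_spec (blkLen_ne_zero_of_lt_dCount hj)
    have hL := hlong _ _ hiθ
    have hstep := blkPos_add_blkLen_le (μ := μ) (θ := θ) (e := e) (y := y) (q := q) hij
    exact ⟨_, _, le_blkPos i, by omega, by omega, fun t ht => hletters t (by omega)⟩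
  simp only [GoodBlock, not_forall] at hbad
  obtain ⟨i, j, hi, hj, hlen, hletters, hne⟩ := hbad
  rcases lt_or_gt_of_ne hne with hij | hji
  · exact key i j hij hj hlen hletters
  · exact key j i hji hi hlen.symm fun t ht => (hletters t (hlen ▸ ht)).symm

end Parsing

lemma measure_not_goodBlock_le {A : Type*} [MeasurableSpace A] [Fintype A]
    {μ ν : Measure (ℕ → A)} [IsProbabilityMeasure μ] (hstat : MeasurePreserving shift μ μ)
    {k : ℕ → ℝ} (hID : CondID μ k) {L : ℕ} {c : ℝ≥0∞} (hmax : ∀ u : Fin L → A, μ (cyl u) ≤ c)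
    {θ : ℝ} (hlong : ∀ᵐ y ∂μ, ∀ p ℓ, wp ν (seg y p ℓ) ≤ θ → L ≤ ℓ) (e q : ℕ) :
    μ {y | ¬ GoodBlock ν θ e y q} ≤
      ((e - q) ^ 2 : ℕ) * (ENNReal.ofReal (Real.exp (k L)) * c) := by
  set pairs := (Finset.Ico q e ×ˢ Finset.Ico q e).filter fun pp : ℕ × ℕ => pp.1 + L ≤ pp.2
  have hcover : {y | ¬ GoodBlock ν θ e y q} ≤ᵐ[μ]
      (⋃ pp ∈ pairs, {y : ℕ → A | ∀ t < L, y (pp.1 + t) = y (pp.2 + t)} : Set (ℕ → A)) := by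
    filter_upwards [hlong] with y hy hbad
    obtain ⟨p, p', hqp, hpp', hp'e, hrep⟩ := exists_repeat_of_not_goodBlock hbad hy
    exact Set.mem_biUnion (x := (p, p')) (Finset.mem_filter.2 ⟨Finset.mem_product.2
      ⟨Finset.mem_Ico.2 ⟨hqp, by omega⟩, Finset.mem_Ico.2 ⟨by omega, hp'e⟩⟩, hpp'⟩) hrep
  have hcard : pairs.card ≤ (e - q) ^ 2 := by
    simpa [sq] using Finset.card_filter_le (Finset.Ico q e ×ˢ Finset.Ico q e) _
  calc μ {y | ¬ GoodBlock ν θ e y q}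
      ≤ ∑ pp ∈ pairs, μ {y | ∀ t < L, y (pp.1 + t) = y (pp.2 + t)} :=
        (measure_mono_ae hcover).trans (measure_biUnion_finset_le _ _)
    _ ≤ ∑ _pp ∈ pairs, ENNReal.ofReal (Real.exp (k L)) * c :=
        Finset.sum_le_sum fun pp hpp =>
          measure_repeat_le hstat hID hmax (Finset.mem_filter.1 hpp).2
    _ ≤ ((e - q) ^ 2 : ℕ) * (ENNReal.ofReal (Real.exp (k L)) * c) := by
        rw [Finset.sum_const, nsmul_eq_mul]
        gcongr

lemma tendsto_ceil_ellMinus {γm : ℝ} (hγm : γm < 0) :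
    Tendsto (fun N : ℕ => ⌈ellMinus N γm⌉₊) atTop atTop :=
  tendsto_nat_ceil_atTop.comp <|
    (Real.tendsto_log_atTop.comp tendsto_natCast_atTop_atTop).atTop_div_const (by linarith)

lemma exp_mul_ellMinus {γm : ℝ} (hγm : γm ≠ 0) {N : ℕ} (hN : 0 < N) :
    Real.exp (γm * ellMinus N γm) = (N : ℝ) ^ (-(1 / 2 : ℝ)) := by
  rw [Real.rpow_def_of_pos (by exact_mod_cast hN), ellMinus]
  congr 1
  field_simp

/-- Words with `ℓ < ℓ₋` beyond the (SE) threshold have probability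
`≥ e^{γ₋ ℓ} > e^{γ₋ ℓ₋} = N^{-1/2}`; the finitely many shorter ones have probabilities bounded
away from zero. -/
lemma CondSE.eventually_ceil_ellMinus_le {A : Type*} [MeasurableSpace A] [Finite A]
    {μ : Measure (ℕ → A)} [IsFiniteMeasure μ] {γm : ℝ} (hSE : CondSE μ γm) :
    ∀ᶠ N : ℕ in atTop, ∀ ℓ (a : Fin ℓ → A), 0 < μ (cyl a) →
      wp μ a ≤ (N : ℝ) ^ (-(1 / 2 : ℝ)) → ⌈ellMinus N γm⌉₊ ≤ ℓ := by
  obtain ⟨hγm, hSE⟩ := hSE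
  obtain ⟨n₁, hn₁⟩ := eventually_atTop.1 hSE
  have hshort : ∀ᶠ N : ℕ in atTop, ∀ w : Σ ℓ : Fin n₁, Fin ℓ → A, 0 < μ (cyl w.2) →
      (N : ℝ) ^ (-(1 / 2 : ℝ)) < wp μ w.2 := by
    refine eventually_all.2 fun w => ?_
    by_cases hw : 0 < μ (cyl w.2)
    · have hlim : Tendsto (fun N : ℕ => (N : ℝ) ^ (-(1 / 2 : ℝ))) atTop (nhds 0) :=
        (tendsto_rpow_neg_atTop (by norm_num)).comp tendsto_natCast_atTop_atTop
      filter_upwards [hlim.eventually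
        (gt_mem_nhds (ENNReal.toReal_pos hw.ne' (measure_ne_top μ _)))] with N hN _
      exact hN
    · exact .of_forall fun _ h => absurd h hw
  filter_upwards [hshort, eventually_gt_atTop 0] with N hN hN0 ℓ a ha hwp
  by_contra! hlt
  rcases lt_or_ge ℓ n₁ with hℓ | hℓ
  · exact (hN ⟨⟨ℓ, hℓ⟩, a⟩ ha).not_ge hwp
  · have hexp : Real.exp (γm * ellMinus N γm) < Real.exp (γm * ℓ) :=
      Real.exp_lt_exp.2 (mul_lt_mul_of_neg_left (Nat.lt_ceil.1 hlt) hγm)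
    rw [exp_mul_ellMinus hγm.ne hN0] at hexp
    exact (hexp.trans_le (hn₁ ℓ hℓ a ha)).not_ge hwp

lemma blockEnd_sub_blockStart_le (N : ℕ) (α : ℝ) (s : ℕ) :
    blockEnd N α s - blockStart N α s ≤ blockB N α := by
  simp only [blockEnd, blockStart, Nat.succ_mul]
  omega

lemma blockB_le_rpow (N : ℕ) (α : ℝ) : (blockB N α : ℝ) ≤ (N : ℝ) ^ α :=
  Nat.floor_le (Real.rpow_nonneg N.cast_nonneg _)

lemma rpow_sq_mul_exp_ceil_ellMinus_le {γp γm α : ℝ} (hγp : γp ≤ 0)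
    (hα : α ≤ γp / (8 * γm)) {N : ℕ} (hN : 1 ≤ N) :
    ((N : ℝ) ^ α) ^ 2 * Real.exp (γp * ⌈ellMinus N γm⌉₊) ≤ (N : ℝ) ^ (-(2 * α)) := by
  have hN0 : (0 : ℝ) < N := by exact_mod_cast hN
  have hlog : 0 ≤ Real.log N := Real.log_nonneg (by exact_mod_cast hN)
  calc ((N : ℝ) ^ α) ^ 2 * Real.exp (γp * ⌈ellMinus N γm⌉₊)
      ≤ ((N : ℝ) ^ α) ^ 2 * Real.exp (γp * ellMinus N γm) := by
        gcongr ?_ * Real.exp ?_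
        exact mul_le_mul_of_nonpos_left (Nat.le_ceil _) hγp
    _ = Real.exp (Real.log N * (2 * α - γp / (2 * γm))) := by
        rw [Real.rpow_def_of_pos hN0, ← Real.exp_nat_mul, ← Real.exp_add, ellMinus]
        congr 1
        ring
    _ ≤ (N : ℝ) ^ (-(2 * α)) := by
        rw [Real.rpow_def_of_pos hN0]
        gcongr
        linarith [show γp / (2 * γm) = 4 * (γp / (8 * γm)) by ring]

theorem bad_block_prob_general {A : Type*} [Fintype A] [MeasurableSpace A]
    (μP μQ : Measure (ℕ → A)) [IsProbabilityMeasure μP] [IsProbabilityMeasure μQ]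
    (hPstat : MeasurePreserving shift μP μP)
    (hQstat : MeasurePreserving shift μQ μQ)
    (hsupp : suppSet μQ ⊆ suppSet μP)
    (γp γm : ℝ) (hPSE : CondSE μP γm)
    (kQ : ℕ → ℝ) (hQID : CondID μQ kQ) (hQFE : CondFE μQ γp)
    (ε α : ℝ) (hε : 0 < ε ∧ ε < 1 / 2) (hα : 0 < α ∧ α < γp / (8 * γm)) :
    ∀ s : ℕ, ∀ᶠ N : ℕ in atTop, s < blockM N α →
      (μQ {y | s ∈ badSet μP N α ε y}).toReal ≤
        Real.exp (kQ ⌈ellMinus N γm⌉₊) * (N : ℝ) ^ (-(2 * α)) := by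
  intro s
  filter_upwards [hPSE.eventually_ceil_ellMinus_le,
    (tendsto_ceil_ellMinus hPSE.1).eventually hQFE.eventually_measure_cyl_le,
    eventually_ge_atTop 1] with N hlong hQmax hN _
  set L := ⌈ellMinus N γm⌉₊
  have hlong_ae : ∀ᵐ y ∂μQ, ∀ p ℓ, wp μP (seg y p ℓ) ≤ (N : ℝ) ^ (-1 - ε) → L ≤ ℓ := by
    filter_upwards [ae_mem_suppSet μQ] with y hy p ℓ hwp
    refine hlong ℓ _ (measure_cyl_seg_pos hPstat (hsupp hy) p ℓ) (hwp.trans ?_)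
    exact Real.rpow_le_rpow_of_exponent_le (by exact_mod_cast hN) (by linarith)
  have hbad := measure_not_goodBlock_le hQstat hQID hQmax hlong_ae
    (blockEnd N α s) (blockStart N α s)
  calc (μQ {y | s ∈ badSet μP N α ε y}).toReal
      ≤ ((blockEnd N α s - blockStart N α s) ^ 2 : ℕ) *
          (Real.exp (kQ L) * Real.exp (γp * L)) := by
        refine (ENNReal.toReal_mono (by finiteness)
          ((measure_mono fun y hy => hy.2).trans hbad)).trans_eq ?_
        rw [ENNReal.toReal_mul, ENNReal.toReal_mul, ENNReal.toReal_natCast,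
          ENNReal.toReal_ofReal (Real.exp_pos _).le, ENNReal.toReal_ofReal (Real.exp_pos _).le]
    _ ≤ ((N : ℝ) ^ α) ^ 2 * (Real.exp (kQ L) * Real.exp (γp * L)) := by
        gcongr
        push_cast
        gcongr
        exact (Nat.cast_le.2 (blockEnd_sub_blockStart_le N α s)).trans (blockB_le_rpow N α)
    _ ≤ Real.exp (kQ L) * (N : ℝ) ^ (-(2 * α)) := by
        rw [mul_left_comm]
        gcongr
        exact rpow_sq_mul_exp_ceil_ellMinus_le hQFE.1.le hα.2.le hN

/-- **Lemma 3.5.** Probability that a given block of the block auxiliary parsing is bad. -/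
theorem bad_block_prob {A : Type*} [Fintype A] [MeasurableSpace A]
    (μP μQ : Measure (ℕ → A)) [IsProbabilityMeasure μP] [IsProbabilityMeasure μQ]
    (hPstat : MeasurePreserving shift μP μP)
    (hQstat : MeasurePreserving shift μQ μQ)
    (hsupp : suppSet μQ ⊆ suppSet μP)
    (γp γm : ℝ) (hPFE : CondFE μP γp) (hPSE : CondSE μP γm)
    (kQ : ℕ → ℝ) (hQID : CondID μQ kQ) (hQFE : CondFE μQ γp)
    (ε α : ℝ) (hε : 0 < ε ∧ ε < 1 / 2) (hα : 0 < α ∧ α < γp / (8 * γm)) :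
    ∀ s : ℕ, ∀ᶠ N : ℕ in atTop, s < blockM N α →
      (μQ {y | s ∈ badSet μP N α ε y}).toReal ≤
        Real.exp (kQ ⌈ellMinus N γm⌉₊) * (N : ℝ) ^ (-(2 * α)) :=
  bad_block_prob_general μP μQ hPstat hQstat hsupp γp γm hPSE kQ hQID hQFE ε α hε hα

end ZM
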